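/- Let X be a regular simplicial set of finite dimension and U a finite simplicial set (finitely many non-degenerate simplices). Then the internal hom Hom(U, X) has finite dimension; moreover dim Hom(U,X) ≤ (Σ_u (|u|+1)) · dim X, where u ranges over the non-degenerate simplices of U and |u| is the degree of u. In particular, if X is additionally finite, then Hom(U, X) is finite. -/

import Mathlib

open CategoryTheory Simplicial MonoidalCategory SSet Limits

universe u v

/-- A simplex is degenerate if it is the image of a degeneracy map. -/
def SDeg (X : SSet.{u}) : ∀ {n : ℕ}, X _⦋n⦌ → Prop := fun {n} x => match n, x with
  | 0, _ => False
  | n + 1, x => ∃ (i : Fin (n + 1)) (y : X _⦋n⦌), x = X.map (SimplexCategory.σ i).op y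

/-- The `i`-th elementary edge `X(φ(i,i+1))(x)` of a `p`-simplex `x`. -/
def elemEdge (X : SSet.{u}) {p : ℕ} (x : X _⦋p⦌) (i : Fin p) : X _⦋1⦌ :=
  X.map (SimplexCategory.mkOfLe i.castSucc i.succ (Fin.castSucc_lt_succ (i := i)).le).op x

/-- A simplicial set is regular (property `P_1`) if any simplex with a degenerate
`i`-th elementary edge is an `i`-th degeneracy. -/
def SReg (X : SSet.{u}) : Prop :=
  ∀ (p : ℕ) (x : X _⦋p + 1⦌) (i : Fin (p + 1)),
    SDeg X (elemEdge X x i) → ∃ y : X _⦋p⦌, x = X.map (SimplexCategory.σ i).op y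

/-- The internal hom of simplicial sets: its `p`-simplices are the
simplicial maps `Δ[p] ⊗ U ⟶ X`. -/
noncomputable def sHom (U X : SSet.{u}) : SSet.{u} where
  obj m := SSet.stdSimplex.obj m.unop ⊗ U ⟶ X
  map φ := TypeCat.ofHom fun f => (SSet.stdSimplex.map φ.unop ▷ U) ≫ f
  map_id m := by ext f : 3; simp [CategoryTheory.Functor.map_id SSet.stdSimplex]
  map_comp φ ψ := by ext f : 3; simp [CategoryTheory.Functor.map_comp SSet.stdSimplex]

/-!
A nondegenerate `(p+1)`-simplex `f : Δ[p+1] × U → X` of `Hom(U, X)` is not of the form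
`s_i d_{i+1} f` for any `i`. By regularity of `X`, it is of that form as soon as, for every
nondegenerate `u ∈ U` and every vertex `j` of `u`, the `i`-th elementary edge of the simplex
`f(id, u ∘ const_j)` of `X` is degenerate: the values `i+1` of a map `ξ : [n] → [p+1]` can be
lowered to `i` one at a time, and each step compares the faces `d_j` and `d_{j+1}` of a simplex
whose `j`-th edge is such an edge. Hence each of the `p+1` indices `i` is witnessed by one of the
`∑_u (|u|+1)` pairs `(u, j)`, while a simplex of `X`, being a degeneracy of one of dimension
`≤ q`, has at most `q` nondegenerate elementary edges; by pigeonhole `p + 1 ≤ (∑_u (|u|+1)) q`.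
Finiteness follows since every `Hom(U, X)_p = Hom(Δ[p] × U, X)` is then finite.
-/
open SimplexCategory Opposite

open Finset in
lemma Monotone.card_filter_castSucc_lt_succ_le {n r : ℕ} {g : Fin (n + 1) → Fin (r + 1)}
    (hg : Monotone g) : #(univ.filter fun j : Fin n ↦ g j.castSucc < g j.succ) ≤ r := by
  set S := univ.filter fun j : Fin n ↦ g j.castSucc < g j.succ
  have hinj : Set.InjOn (fun j : Fin n ↦ g j.succ) S := by
    refine StrictMonoOn.injOn fun a _ b hb hab ↦ ?_
    simp only [S, coe_filter, mem_univ, true_and] at hb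
    exact (hg (Fin.succ_le_castSucc_iff.mpr hab)).trans_lt hb
  calc #S ≤ #(univ.erase (0 : Fin (r + 1))) := by
        refine card_le_card_of_injOn _ (fun j hj ↦ ?_) hinj
        simp only [S, coe_filter, mem_univ, true_and] at hj
        exact mem_erase.mpr ⟨(Fin.zero_le _ |>.trans_lt hj).ne', mem_univ _⟩
    _ = r := by simp

namespace SimplexCategory

lemma σ_comp_δ_succ_apply {n : ℕ} (i : Fin (n + 1)) (x : Fin (n + 2)) :
    (σ i ≫ δ i.succ).toOrderHom x = if x = i.succ then i.castSucc else x := by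
  change i.succ.succAbove (i.predAbove x) = _
  simp only [Fin.ext_iff, Fin.succAbove, Fin.predAbove, Fin.lt_def, Fin.val_castSucc,
    Fin.val_succ]
  split_ifs <;> simp_all <;> omega

lemma δ_succ_apply_of_ne {n : ℕ} {j z : Fin (n + 1)} (h : z ≠ j) :
    (δ j.succ).toOrderHom z = (δ j.castSucc).toOrderHom z := by
  change j.succ.succAbove z = j.castSucc.succAbove z
  rcases h.lt_or_gt with h | h
  · rw [Fin.succAbove_succ_of_le _ _ h.le, Fin.succAbove_castSucc_of_lt _ _ h]
  · rw [Fin.succAbove_succ_of_lt _ _ h, Fin.succAbove_castSucc_of_le _ _ h.le]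

lemma exists_δ_castSucc_comp_eq {n p : ℕ} (ξ : ⦋n⦌ ⟶ ⦋p + 1⦌) (i : Fin (p + 1))
    (j : Fin (n + 1)) (hj : ξ.toOrderHom j = i.succ) (hmin : ∀ z < j, ξ.toOrderHom z ≠ i.succ) :
    ∃ ξ' : ⦋n + 1⦌ ⟶ ⦋p + 1⦌, δ j.castSucc ≫ ξ' = ξ ∧ ξ'.toOrderHom j.castSucc = i.castSucc := by
  have hlow : ∀ z < j, ξ.toOrderHom z ≤ i.castSucc := fun z hz ↦ Fin.le_castSucc_iff.2 <|
    (hj ▸ ξ.toOrderHom.monotone hz.le).lt_of_ne (hmin z hz)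
  let cap : Fin (n + 2) →o Fin (p + 2) :=
    ⟨fun z ↦ if z ≤ j.castSucc then i.castSucc else Fin.last _, fun a b hab ↦ by
      dsimp only; split_ifs <;> first | (exact le_rfl) | (exact Fin.le_last _) | omega⟩
  -- `ξ'` repeats the value of `ξ` at `j` and lowers the first copy to `i`; since `ξ ≤ i` before
  -- `j`, capping `ξ ∘ σ_j` by `i` up to `j.castSucc` changes nothing else.
  refine ⟨mkHom ((σ j ≫ ξ).toOrderHom ⊓ cap), ?_, ?_⟩
  · ext z : 3
    have hσδ : (σ j).toOrderHom ((δ j.castSucc).toOrderHom z) = z :=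
      congr($(δ_comp_σ_self (i := j)).toOrderHom z)
    change min (ξ.toOrderHom ((σ j).toOrderHom ((δ j.castSucc).toOrderHom z)))
      (cap ((δ j.castSucc).toOrderHom z)) = ξ.toOrderHom z
    rw [hσδ]
    refine min_eq_left ?_
    change _ ≤ ite _ _ _
    rcases lt_or_ge z j with hz | hz
    · rw [if_pos (by simpa [δ, Fin.succAbove_castSucc_of_lt _ _ hz] using hz.le)]
      exact hlow z hz
    · rw [if_neg (by simpa [δ, Fin.succAbove_castSucc_of_le _ _ hz] using hz)]
      exact Fin.le_last _
  · change min (ξ.toOrderHom (j.predAbove j.castSucc)) (cap j.castSucc) = i.castSucc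
    rw [Fin.predAbove_castSucc_self, hj]
    have hcap : cap j.castSucc = i.castSucc := if_pos le_rfl
    rw [hcap]
    exact min_eq_right Fin.castSucc_lt_succ.le

lemma exists_eq_δ_castSucc_comp {n p : ℕ} (ξ : ⦋n⦌ ⟶ ⦋p + 1⦌) (i : Fin (p + 1))
    (hi : ∃ z, ξ.toOrderHom z = i.succ) :
    ∃ (j : Fin (n + 1)) (ξ' : ⦋n + 1⦌ ⟶ ⦋p + 1⦌), δ j.castSucc ≫ ξ' = ξ ∧
      ξ'.toOrderHom j.castSucc = i.castSucc ∧ ξ'.toOrderHom j.succ = i.succ := by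
  classical
  let j := Fin.find _ hi
  obtain ⟨ξ', hξ', hj⟩ := exists_δ_castSucc_comp_eq ξ i j (Fin.find_spec hi)
    fun z hz ↦ Fin.find_min hi hz
  refine ⟨j, ξ', hξ', hj, ?_⟩
  calc ξ'.toOrderHom j.succ = ξ'.toOrderHom (j.castSucc.succAbove j) := by
        rw [Fin.succAbove_castSucc_self]
    _ = ξ.toOrderHom j := congr($(hξ').toOrderHom j)
    _ = i.succ := Fin.find_spec hi

lemma δ_succ_comp_comp_σ_comp_δ_succ {n p : ℕ} {i : Fin (p + 1)} {j : Fin (n + 1)}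
    {ξ : ⦋n + 1⦌ ⟶ ⦋p + 1⦌} (h₁ : ξ.toOrderHom j.castSucc = i.castSucc)
    (h₂ : ξ.toOrderHom j.succ = i.succ) :
    (δ j.succ ≫ ξ) ≫ σ i ≫ δ i.succ = (δ j.castSucc ≫ ξ) ≫ σ i ≫ δ i.succ := by
  ext z : 3
  change (σ i ≫ δ i.succ).toOrderHom (ξ.toOrderHom ((δ j.succ).toOrderHom z)) =
    (σ i ≫ δ i.succ).toOrderHom (ξ.toOrderHom ((δ j.castSucc).toOrderHom z))
  rcases eq_or_ne z j with rfl | hz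
  · change (σ i ≫ δ i.succ).toOrderHom (ξ.toOrderHom (z.succ.succAbove z)) =
      (σ i ≫ δ i.succ).toOrderHom (ξ.toOrderHom (z.castSucc.succAbove z))
    rw [Fin.succAbove_succ_self, Fin.succAbove_castSucc_self, h₁, h₂, σ_comp_δ_succ_apply,
      σ_comp_δ_succ_apply, if_neg Fin.castSucc_lt_succ.ne, if_pos rfl]
  · rw [δ_succ_apply_of_ne hz]

open Finset in
lemma card_filter_δ_succ_comp_lt {n p : ℕ} {i : Fin (p + 1)} {j : Fin (n + 1)}
    {ξ : ⦋n + 1⦌ ⟶ ⦋p + 1⦌} (h₁ : ξ.toOrderHom j.castSucc = i.castSucc)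
    (h₂ : ξ.toOrderHom j.succ = i.succ) :
    #(univ.filter fun z ↦ (δ j.succ ≫ ξ).toOrderHom z = i.succ) <
      #(univ.filter fun z ↦ (δ j.castSucc ≫ ξ).toOrderHom z = i.succ) := by
  have hj₁ : (δ j.succ ≫ ξ).toOrderHom j = i.castSucc := by
    change ξ.toOrderHom (j.succ.succAbove j) = _
    rw [Fin.succAbove_succ_self, h₁]
  have hj₂ : (δ j.castSucc ≫ ξ).toOrderHom j = i.succ := by
    change ξ.toOrderHom (j.castSucc.succAbove j) = _
    rw [Fin.succAbove_castSucc_self, h₂]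
  refine card_lt_card ⟨fun z ↦ ?_, fun h ↦ ?_⟩
  · simp only [mem_filter, mem_univ, true_and]
    rcases eq_or_ne z j with rfl | hz
    · exact fun h ↦ absurd (hj₁.symm.trans h) Fin.castSucc_lt_succ.ne
    · exact fun h ↦ (congrArg ξ.toOrderHom (δ_succ_apply_of_ne hz)).symm.trans h
  · have := h (mem_filter.2 ⟨mem_univ j, hj₂⟩)
    exact Fin.castSucc_lt_succ.ne (hj₁.symm.trans (mem_filter.1 this).2)

end SimplexCategory

namespace SSet

variable {U X : SSet.{u}}

lemma sDeg_iff_mem_degenerate {n : ℕ} (x : X _⦋n⦌) : SDeg X x ↔ x ∈ X.degenerate n := by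
  cases n with
  | zero => simp [SDeg]
  | succ n =>
    simp only [SDeg, degenerate_eq_iUnion_range_σ, Set.mem_iUnion, Set.mem_range, eq_comm]
    rfl

lemma hasDimensionLE_iff_sDeg {q : ℕ} :
    X.HasDimensionLE q ↔ ∀ (m : ℕ) (x : X _⦋m + 1⦌), q < m + 1 → SDeg X x := by
  simp only [hasDimensionLT_iff, sDeg_iff_mem_degenerate, Set.top_eq_univ, Set.eq_univ_iff_forall]
  refine ⟨fun h m x hm ↦ h (m + 1) hm x, fun h n hn x ↦ ?_⟩
  obtain ⟨m, rfl⟩ := Nat.exists_eq_add_of_le' (Nat.zero_lt_of_lt hn)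
  exact h m x hn

def nEquivNotSDeg : X.N ≃ {x : Σ m : ℕ, X _⦋m⦌ // ¬ SDeg X x.2} where
  toFun x := ⟨⟨x.dim, x.simplex⟩, (sDeg_iff_mem_degenerate _).not.2 x.nonDegenerate⟩
  invFun x := N.mk x.1.2 ((sDeg_iff_mem_degenerate _).not.1 x.2)
  left_inv _ := rfl
  right_inv _ := rfl

lemma finite_iff_finite_nonSDeg :
    X.Finite ↔ Finite {x : Σ m : ℕ, X _⦋m⦌ // ¬ SDeg X x.2} :=
  ⟨fun h ↦ nEquivNotSDeg.finite_iff.1 h.finite, fun h ↦ ⟨nEquivNotSDeg.finite_iff.2 h⟩⟩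

lemma elemEdge_map {n m : ℕ} (e : ⦋n⦌ ⟶ ⦋m⦌) (y : X _⦋m⦌) (i : Fin n) :
    elemEdge X (X.map e.op y) i =
      X.map (mkOfLe i.castSucc i.succ Fin.castSucc_lt_succ.le ≫ e).op y := by
  rw [elemEdge, op_comp, Functor.map_comp_apply]

lemma elemEdge_map_mem_degenerate {n m : ℕ} (e : ⦋n⦌ ⟶ ⦋m⦌) (y : X _⦋m⦌) (i : Fin n)
    (h : e.toOrderHom i.castSucc = e.toOrderHom i.succ) :
    elemEdge X (X.map e.op y) i ∈ X.degenerate 1 := by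
  obtain ⟨θ, hθ⟩ := eq_σ_comp_of_not_injective' (mkOfLe _ _ Fin.castSucc_lt_succ.le ≫ e) 0 h
  rw [elemEdge_map, hθ, op_comp, Functor.map_comp_apply]
  exact X.σ_mem_degenerate 0 _

open Finset Classical in
lemma card_filter_elemEdge_mem_nonDegenerate_le {q : ℕ} [X.HasDimensionLE q] {n : ℕ}
    (x : X _⦋n⦌) : #(univ.filter fun i : Fin n ↦ elemEdge X x i ∈ X.nonDegenerate 1) ≤ q := by
  obtain ⟨m, e, -, y, rfl⟩ := X.exists_nonDegenerate x
  calc #(univ.filter fun i : Fin n ↦ elemEdge X (X.map e.op y) i ∈ X.nonDegenerate 1)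
      ≤ #(univ.filter fun i : Fin n ↦ e.toOrderHom i.castSucc < e.toOrderHom i.succ) := by
        refine card_le_card fun i ↦ ?_
        simp only [mem_filter, mem_univ, true_and]
        refine fun hi ↦ (e.toOrderHom.monotone (Fin.castSucc_le_succ i)).lt_of_ne fun he ↦ ?_
        exact hi (elemEdge_map_mem_degenerate e y.1 i he)
    _ ≤ m := e.toOrderHom.monotone.card_filter_castSucc_lt_succ_le
    _ ≤ q := X.dim_le_of_nonDegenerate y q

lemma SReg.map_δ_castSucc_eq_map_δ_succ (hX : SReg X) {n : ℕ} {x : X _⦋n + 1⦌}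
    {j : Fin (n + 1)} (hx : elemEdge X x j ∈ X.degenerate 1) :
    X.map (δ j.castSucc).op x = X.map (δ j.succ).op x := by
  obtain ⟨y, rfl⟩ := hX n x j ((sDeg_iff_mem_degenerate _).2 hx)
  simp only [← Functor.map_comp_apply, ← op_comp, δ_comp_σ_self, δ_comp_σ_succ]

lemma app_comp_map_comp {p n n' m : ℕ} (f : Δ[p] ⊗ U ⟶ X) (β : ⦋n'⦌ ⟶ ⦋n⦌)
    (ξ : ⦋n⦌ ⟶ ⦋p⦌) (τ : ⦋n⦌ ⟶ ⦋m⦌) (u : U _⦋m⦌) :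
    f.app (op ⦋n'⦌) (ULift.up (β ≫ ξ), U.map (β ≫ τ).op u) =
      X.map β.op (f.app (op ⦋n⦌) (ULift.up ξ, U.map τ.op u)) := by
  rw [op_comp, Functor.map_comp_apply]
  exact NatTrans.naturality_apply f β.op ((ULift.up ξ, U.map τ.op u) : (Δ[p] ⊗ U).obj (op ⦋n⦌))

/-- The simplex `x'(u, j)` of the paper: `f` restricted to `Δ[p]` times the `j`-th vertex
of `u`. -/
def vertexSlice {p m : ℕ} (f : Δ[p] ⊗ U ⟶ X) (u : U _⦋m⦌) (j : Fin (m + 1)) : X _⦋p⦌ :=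
  f.app (op ⦋p⦌) (ULift.up (𝟙 _), U.map (SimplexCategory.const ⦋p⦌ ⦋m⦌ j).op u)

lemma elemEdge_app_eq_elemEdge_vertexSlice {p n m : ℕ} (f : Δ[p] ⊗ U ⟶ X) (u : U _⦋m⦌)
    (ξ : ⦋n + 1⦌ ⟶ ⦋p⦌) (τ : ⦋n + 1⦌ ⟶ ⦋m⦌) (i : Fin p) (j : Fin (n + 1))
    (hξ₁ : ξ.toOrderHom j.castSucc = i.castSucc) (hξ₂ : ξ.toOrderHom j.succ = i.succ)
    (hτ : τ.toOrderHom j.castSucc = τ.toOrderHom j.succ) :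
    elemEdge X (f.app _ (ULift.up ξ, U.map τ.op u)) j =
      elemEdge X (vertexSlice f u (τ.toOrderHom j.castSucc)) i := by
  have hξ : mkOfLe _ _ Fin.castSucc_lt_succ.le ≫ ξ = mkOfLe _ _ Fin.castSucc_lt_succ.le :=
    Hom.ext_one_left _ _ hξ₁ hξ₂
  have hτ' : mkOfLe _ _ Fin.castSucc_lt_succ.le ≫ τ =
      SimplexCategory.const ⦋1⦌ ⦋m⦌ (τ.toOrderHom j.castSucc) :=
    Hom.ext_one_left _ _ rfl hτ.symm
  rw [elemEdge, elemEdge, vertexSlice, ← app_comp_map_comp, ← app_comp_map_comp, hξ, hτ',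
    Category.comp_id]
  rfl

section Regular

variable (hX : SReg X) {p m : ℕ} (f : Δ[p + 1] ⊗ U ⟶ X) (i : Fin (p + 1)) (u : U _⦋m⦌)
  (hu : ∀ j, elemEdge X (vertexSlice f u j) i ∈ X.degenerate 1)
include hX hu

lemma app_δ_castSucc_comp_eq_app_δ_succ_comp {n : ℕ} (ξ : ⦋n + 1⦌ ⟶ ⦋p + 1⦌)
    (τ : ⦋n⦌ ⟶ ⦋m⦌) (j : Fin (n + 1)) (h₁ : ξ.toOrderHom j.castSucc = i.castSucc)
    (h₂ : ξ.toOrderHom j.succ = i.succ) :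
    f.app (op ⦋n⦌) (ULift.up (δ j.castSucc ≫ ξ), U.map τ.op u) =
      f.app (op ⦋n⦌) (ULift.up (δ j.succ ≫ ξ), U.map τ.op u) := by
  have hedge : elemEdge X (f.app _ (ULift.up ξ, U.map (σ j ≫ τ).op u)) j ∈ X.degenerate 1 := by
    rw [elemEdge_app_eq_elemEdge_vertexSlice f u ξ (σ j ≫ τ) i j h₁ h₂ ?_]
    · exact hu _
    change τ.toOrderHom (j.predAbove j.castSucc) = τ.toOrderHom (j.predAbove j.succ)
    rw [Fin.predAbove_castSucc_self, Fin.predAbove_succ_self]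
  conv_lhs => rw [← δ_comp_σ_self_assoc (i := j) τ]
  conv_rhs => rw [← δ_comp_σ_succ_assoc (i := j) τ]
  rw [app_comp_map_comp, app_comp_map_comp, hX.map_δ_castSucc_eq_map_δ_succ hedge]

open Finset in
lemma app_comp_σ_comp_δ_succ {n : ℕ} (τ : ⦋n⦌ ⟶ ⦋m⦌) (ξ : ⦋n⦌ ⟶ ⦋p + 1⦌) :
    f.app (op ⦋n⦌) (ULift.up (ξ ≫ σ i ≫ δ i.succ), U.map τ.op u) =
      f.app (op ⦋n⦌) (ULift.up ξ, U.map τ.op u) := by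
  induction hk : #(univ.filter fun z ↦ ξ.toOrderHom z = i.succ) using Nat.strong_induction_on
    generalizing ξ with | _ k ih
  by_cases hi : ∃ z, ξ.toOrderHom z = i.succ
  · obtain ⟨j, ξ', rfl, h₁, h₂⟩ := exists_eq_δ_castSucc_comp ξ i hi
    rw [← δ_succ_comp_comp_σ_comp_δ_succ h₁ h₂,
      ih _ (hk ▸ card_filter_δ_succ_comp_lt h₁ h₂) _ rfl,
      app_δ_castSucc_comp_eq_app_δ_succ_comp hX f i u hu ξ' τ j h₁ h₂]
  · suffices ξ ≫ σ i ≫ δ i.succ = ξ by rw [this]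
    ext z : 3
    change (σ i ≫ δ i.succ).toOrderHom (ξ.toOrderHom z) = _
    rw [σ_comp_δ_succ_apply, if_neg fun h ↦ hi ⟨z, h⟩]

end Regular

lemma eq_whiskerRight_σ_comp_whiskerRight_δ_comp (hX : SReg X) {p : ℕ}
    (f : Δ[p + 1] ⊗ U ⟶ X) (i : Fin (p + 1))
    (H : ∀ (m : ℕ) (u : U _⦋m⦌), u ∈ U.nonDegenerate m →
      ∀ j, elemEdge X (vertexSlice f u j) i ∈ X.degenerate 1) :
    f = (SSet.stdSimplex.map (σ i) ▷ U) ≫ (SSet.stdSimplex.map (δ i.succ) ▷ U) ≫ f := by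
  refine NatTrans.ext (funext fun n ↦ ConcreteCategory.hom_ext _ _ fun ⟨⟨ξ⟩, w⟩ ↦ ?_)
  obtain ⟨m, α, -, u, rfl⟩ := U.exists_nonDegenerate w
  exact (app_comp_σ_comp_δ_succ hX f i u (H m u u.2) α ξ).symm

lemma mem_degenerate_sHom (hX : SReg X) {p : ℕ} (f : (sHom U X) _⦋p + 1⦌) (i : Fin (p + 1))
    (H : ∀ (m : ℕ) (u : U _⦋m⦌), u ∈ U.nonDegenerate m →
      ∀ j, elemEdge X (vertexSlice f u j) i ∈ X.degenerate 1) :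
    f ∈ (sHom U X).degenerate (p + 1) :=
  (sDeg_iff_mem_degenerate f).1 ⟨i, _, eq_whiskerRight_σ_comp_whiskerRight_δ_comp hX f i H⟩

open Finset Classical in
theorem hasDimensionLE_sHom (hX : SReg X) {q : ℕ} [X.HasDimensionLE q]
    (s : Finset (Σ m : ℕ, U _⦋m⦌))
    (hs : ∀ (m : ℕ) (u : U _⦋m⦌), u ∈ U.nonDegenerate m → ⟨m, u⟩ ∈ s) :
    (sHom U X).HasDimensionLE ((∑ x ∈ s, (x.1 + 1)) * q) := by
  refine ⟨fun n hn ↦ Set.eq_univ_of_forall fun f ↦ ?_⟩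
  obtain ⟨p, rfl⟩ := Nat.exists_eq_add_of_le' (Nat.zero_lt_of_lt hn)
  by_contra hf
  have hwit : ∀ i : Fin (p + 1), ∃ (x : s) (j : Fin (x.1.1 + 1)),
      elemEdge X (vertexSlice f x.1.2 j) i ∈ X.nonDegenerate 1 := fun i ↦ by
    by_contra! hi
    exact hf (mem_degenerate_sHom hX f i fun m u hu j ↦ by
      simpa [mem_nonDegenerate_iff_notMem_degenerate] using hi ⟨⟨m, u⟩, hs m u hu⟩ j)
  choose x j hx using hwit
  have hcard : Fintype.card (Σ x : s, Fin (x.1.1 + 1)) * q < Fintype.card (Fin (p + 1)) := by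
    simpa [Fintype.card_sigma, sum_attach s fun x ↦ x.1 + 1] using hn
  obtain ⟨y, hy⟩ := Fintype.exists_lt_card_fiber_of_mul_lt_card
    (fun i ↦ (⟨x i, j i⟩ : Σ x : s, Fin (x.1.1 + 1))) hcard
  refine (hy.trans_le (card_le_card fun i hi ↦ ?_)).not_ge
    (card_filter_elemEdge_mem_nonDegenerate_le (vertexSlice f y.1.1.2 y.2))
  simp only [mem_filter, mem_univ, true_and] at hi ⊢
  exact hi ▸ hx i

lemma finite_hom (A X : SSet.{u}) [A.Finite] [X.Finite] : Finite (A ⟶ X) := by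
  obtain ⟨d, _⟩ := A.hasDimensionLT_of_finite
  refine Finite.of_injective (fun f (k : Fin d) ↦ (f.app (op ⦋k⦌) : A _⦋k⦌ → X _⦋k⦌)) ?_
  intro f g hfg
  refine hom_ext fun ⟨n⟩ ↦ ConcreteCategory.hom_ext _ _ fun x ↦ ?_
  obtain ⟨m, e, -, y, rfl⟩ := A.exists_nonDegenerate x
  have hm : m < d := A.dim_lt_of_nonDegenerate y d
  simp only [NatTrans.naturality_apply, congrFun (congrFun hfg ⟨m, hm⟩) y.1]

lemma finite_of_nonDegenerate_mem_finset (s : Finset (Σ m : ℕ, U _⦋m⦌))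
    (hs : ∀ (m : ℕ) (u : U _⦋m⦌), u ∈ U.nonDegenerate m → ⟨m, u⟩ ∈ s) : U.Finite :=
  finite_iff_finite_nonSDeg.2 <| Finite.of_injective
    (fun x ↦ (⟨x.1, hs _ _ ((sDeg_iff_mem_degenerate _).not.1 x.2)⟩ : s))
    fun _ _ h ↦ Subtype.ext (Subtype.mk.inj h)

instance [U.Finite] [X.Finite] (k : ℕ) : Finite ((sHom U X) _⦋k⦌) :=
  finite_hom (Δ[k] ⊗ U) X

end SSet

/-- If `X` is regular of dimension `≤ q` and `U` is finite, with `s` the finite set of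
non-degenerate simplices of `U`, then `dim Hom(U, X) ≤ (∑_{u ∈ s} (|u|+1)) · q`;
and if moreover `X` is finite then `Hom(U, X)` is finite. -/
theorem stmt_17 (X : SSet.{u}) (hX : SReg X) (q : ℕ)
    (hq : ∀ (m : ℕ) (x : X _⦋m + 1⦌), q < m + 1 → SDeg X x)
    (U : SSet.{u}) (s : Finset (Σ m : ℕ, U _⦋m⦌))
    (hs : ∀ x : Σ m : ℕ, U _⦋m⦌, x ∈ s ↔ ¬ SDeg U x.2) :
    (∀ (p : ℕ) (f : (sHom U X) _⦋p + 1⦌), (∑ x ∈ s, (x.1 + 1)) * q < p + 1 →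
      SDeg (sHom U X) f) ∧
    (Finite {x : Σ m : ℕ, X _⦋m⦌ // ¬ SDeg X x.2} →
      Finite {x : Σ m : ℕ, (sHom U X) _⦋m⦌ // ¬ SDeg (sHom U X) x.2}) := by
  have : X.HasDimensionLE q := hasDimensionLE_iff_sDeg.2 hq
  have hs' (m : ℕ) (u : U _⦋m⦌) (hu : u ∈ U.nonDegenerate m) : ⟨m, u⟩ ∈ s :=
    (hs ⟨m, u⟩).2 ((sDeg_iff_mem_degenerate u).not.2 hu)
  have hdim : (sHom U X).HasDimensionLE ((∑ x ∈ s, (x.1 + 1)) * q) := hasDimensionLE_sHom hX s hs'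
  refine ⟨hasDimensionLE_iff_sDeg.1 hdim, fun hXfin ↦ ?_⟩
  have : X.Finite := finite_iff_finite_nonSDeg.2 hXfin
  have : U.Finite := finite_of_nonDegenerate_mem_finset s hs'
  exact finite_iff_finite_nonSDeg.1 <|
    finite_of_hasDimensionLT _ ((∑ x ∈ s, (x.1 + 1)) * q + 1) fun _ _ ↦ Subtype.finite
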